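/- arXiv:2410.04867 — 3 statements merged into one kernel-verified Lean document; each statement's English description precedes it below -/
import Mathlib

section
/- Fix T > 0 and Q ∈ ℝ. Let θ, η : [0,T] → ℝ be continuously differentiable with η(t) > 0 for all t. Let η̄ = min_{t∈[0,T]} η(t) and let θ̄ > 0 be a constant with θ̄ ≥ −θ'(t) for all t ∈ [0,T]; set γ = θ̄/(2η̄) and assume √γ·T < π. Suppose ζ* : [0,T] → ℝ is twice continuously differentiable, satisfies 2η(t)ζ*''(t) + 2η'(t)ζ*'(t) − θ'(t)ζ*(t) = 0 for all t ∈ [0,T], ζ*(0) = Q, and ζ*(T) = 0. Then ζ* is a global maximizer of the cash functional: for every twice continuously differentiable ζ : [0,T] → ℝ with ζ(0) = Q and ζ(T) = 0, C(ζ) ≤ C(ζ*), where C(ζ) = ∫₀ᵀ (θ(t)ζ(t)ζ'(t) − η(t)ζ'(t)²) dt. -/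
open Set MeasureTheory Real

/-!
Write `h = ζ - ζ*`. Since `2 η ζ*'` has derivative `θ' ζ*` (the Euler–Lagrange equation), an
integration by parts kills the first variation and leaves
`C(ζ) - C(ζ*) = -∫ (θ' h² / 2 + η h'²)`. With `θ' ≥ -θ̄` and `η ≥ η̄` the second variation is at
least `η̄ ∫ (h'² - γ h²)`, which is nonnegative by Wirtinger's inequality on `[0, T]` as soon as
`√γ T < π`. Wirtinger's inequality itself is Picone's identity for the solution
`r = -s tan (s (t - c))` of the Riccati equation `r' = -s² - r²`:
`(r h²)' = h'² - s² h² - (h' - r h)²`.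
-/

/-- The cash functional `C(ζ) = ∫₀ᵀ (θ ζ ζ' − η (ζ')²) dt`, expressed via an explicit
derivative function `ζ'`. -/
noncomputable def cash (T : ℝ) (θ η ζ ζ' : ℝ → ℝ) : ℝ :=
  ∫ t in (0:ℝ)..T, (θ t * ζ t * ζ' t - η t * (ζ' t) ^ 2)

lemma hasDerivAt_neg_mul_tan_mul_sub {s c t : ℝ} (ht : cos (s * (t - c)) ≠ 0) :
    HasDerivAt (fun u => -s * tan (s * (u - c))) (-s ^ 2 - (-s * tan (s * (t - c))) ^ 2) t := by
  have hinner : HasDerivAt (fun u => s * (u - c)) s t := by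
    simpa using ((hasDerivAt_id t).sub_const c).const_mul s
  refine (((hasDerivAt_tan ht).comp t hinner).const_mul (-s)).congr_deriv ?_
  rw [tan_eq_sin_div_cos]
  field_simp
  nlinarith [sin_sq_add_cos_sq (s * (t - c))]

lemma cos_mul_sub_midpoint_pos {a b s t : ℝ} (hs : 0 ≤ s) (hsab : s * (b - a) < π)
    (ht : t ∈ Icc a b) : 0 < cos (s * (t - (a + b) / 2)) := by
  apply cos_pos_of_mem_Ioo
  constructor <;> nlinarith [ht.1, ht.2]

theorem sq_mul_integral_sq_le_integral_deriv_sq {a b s : ℝ} {h h' : ℝ → ℝ} (hab : a ≤ b)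
    (hs : 0 ≤ s) (hsab : s * (b - a) < π)
    (hh : ∀ t ∈ Icc a b, HasDerivAt h (h' t) t) (hh'c : ContinuousOn h' (Icc a b))
    (ha : h a = 0) (hb : h b = 0) :
    s ^ 2 * ∫ t in a..b, h t ^ 2 ≤ ∫ t in a..b, h' t ^ 2 := by
  set r : ℝ → ℝ := fun t => -s * tan (s * (t - (a + b) / 2))
  have hr : ∀ t ∈ Icc a b, HasDerivAt r (-s ^ 2 - r t ^ 2) t := fun t ht =>
    hasDerivAt_neg_mul_tan_mul_sub (cos_mul_sub_midpoint_pos hs hsab ht).ne'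
  have hrc : ContinuousOn r (Icc a b) := HasDerivAt.continuousOn hr
  have hhc : ContinuousOn h (Icc a b) := HasDerivAt.continuousOn hh
  have hpicone : ∀ t ∈ Icc a b, HasDerivAt (fun u => r u * h u ^ 2)
      (h' t ^ 2 - s ^ 2 * h t ^ 2 - (h' t - r t * h t) ^ 2) t := fun t ht =>
    ((hr t ht).mul ((hh t ht).pow 2)).congr_deriv (by simp only [Pi.pow_apply]; ring)
  have hboundary : ∫ t in a..b, (h' t ^ 2 - s ^ 2 * h t ^ 2 - (h' t - r t * h t) ^ 2) = 0 := by
    rw [intervalIntegral.integral_eq_sub_of_hasDerivAt (by rwa [uIcc_of_le hab])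
      (ContinuousOn.intervalIntegrable_of_Icc hab (by fun_prop))]
    simp [ha, hb]
  have hle : ∫ t in a..b, (h' t ^ 2 - s ^ 2 * h t ^ 2 - (h' t - r t * h t) ^ 2) ≤
      ∫ t in a..b, (h' t ^ 2 - s ^ 2 * h t ^ 2) :=
    intervalIntegral.integral_mono_on hab
      (ContinuousOn.intervalIntegrable_of_Icc hab (by fun_prop))
      (ContinuousOn.intervalIntegrable_of_Icc hab (by fun_prop))
      (fun t _ => by nlinarith [sq_nonneg (h' t - r t * h t)])
  have hsplit : ∫ t in a..b, (h' t ^ 2 - s ^ 2 * h t ^ 2) =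
      (∫ t in a..b, h' t ^ 2) - s ^ 2 * ∫ t in a..b, h t ^ 2 := by
    rw [intervalIntegral.integral_sub (ContinuousOn.intervalIntegrable_of_Icc hab (by fun_prop))
      (ContinuousOn.intervalIntegrable_of_Icc hab (by fun_prop)),
      intervalIntegral.integral_const_mul]
  linarith

theorem cash_sub_cash_of_hasDerivAt_momentum {T : ℝ} {θ θ' η ζs ζs' ζ ζ' : ℝ → ℝ}
    (hT : 0 ≤ T)
    (hθ : ∀ t ∈ Icc 0 T, HasDerivAt θ (θ' t) t) (hθ'c : ContinuousOn θ' (Icc 0 T))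
    (hηc : ContinuousOn η (Icc 0 T))
    (hζs : ∀ t ∈ Icc 0 T, HasDerivAt ζs (ζs' t) t) (hζs'c : ContinuousOn ζs' (Icc 0 T))
    (hmomentum : ∀ t ∈ Icc 0 T, HasDerivAt (fun u => 2 * η u * ζs' u) (θ' t * ζs t) t)
    (hζ : ∀ t ∈ Icc 0 T, HasDerivAt ζ (ζ' t) t) (hζ'c : ContinuousOn ζ' (Icc 0 T))
    (h0 : ζ 0 = ζs 0) (hT' : ζ T = ζs T) :
    cash T θ η ζ ζ' - cash T θ η ζs ζs' =
      -∫ t in (0:ℝ)..T, (θ' t * (ζ t - ζs t) ^ 2 / 2 + η t * (ζ' t - ζs' t) ^ 2) := by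
  have hθc : ContinuousOn θ (Icc 0 T) := HasDerivAt.continuousOn hθ
  have hζsc : ContinuousOn ζs (Icc 0 T) := HasDerivAt.continuousOn hζs
  have hζc : ContinuousOn ζ (Icc 0 T) := HasDerivAt.continuousOn hζ
  set G : ℝ → ℝ := fun t => θ' t * (ζ t ^ 2 - ζs t ^ 2) / 2 + θ t * (ζ t * ζ' t - ζs t * ζs' t)
    - (θ' t * ζs t * (ζ t - ζs t) + 2 * η t * ζs' t * (ζ' t - ζs' t))
  have hG : ∀ t ∈ Icc 0 T, HasDerivAt
      (fun u => θ u * (ζ u ^ 2 - ζs u ^ 2) / 2 - 2 * η u * ζs' u * (ζ u - ζs u)) (G t) t :=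
    fun t ht => (((hθ t ht).mul (((hζ t ht).pow 2).sub ((hζs t ht).pow 2))).div_const 2).sub
      ((hmomentum t ht).mul ((hζ t ht).sub (hζs t ht))) |>.congr_deriv
        (by simp only [G, Pi.sub_apply, Pi.pow_apply]; ring)
  have hGint : ∫ t in (0:ℝ)..T, G t = 0 := by
    rw [intervalIntegral.integral_eq_sub_of_hasDerivAt (by rwa [uIcc_of_le hT])
      (ContinuousOn.intervalIntegrable_of_Icc hT (by fun_prop))]
    simp [h0, hT']
  have hsplit : cash T θ η ζ ζ' - cash T θ η ζs ζs' = ∫ t in (0:ℝ)..T,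
      (G t - (θ' t * (ζ t - ζs t) ^ 2 / 2 + η t * (ζ' t - ζs' t) ^ 2)) := by
    rw [cash, cash, ← intervalIntegral.integral_sub
      (ContinuousOn.intervalIntegrable_of_Icc hT (by fun_prop))
      (ContinuousOn.intervalIntegrable_of_Icc hT (by fun_prop))]
    congr 1 with t
    ring
  rw [hsplit, intervalIntegral.integral_sub
    (ContinuousOn.intervalIntegrable_of_Icc hT (by fun_prop))
    (ContinuousOn.intervalIntegrable_of_Icc hT (by fun_prop)), hGint, zero_sub]

theorem integral_second_variation_nonneg {a b ηbar θbar : ℝ} {θ' η h h' : ℝ → ℝ} (hab : a ≤ b)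
    (hηbar : 0 < ηbar) (hθbar : 0 ≤ θbar) (hγ : √(θbar / (2 * ηbar)) * (b - a) < π)
    (hη : ∀ t ∈ Icc a b, ηbar ≤ η t) (hθ' : ∀ t ∈ Icc a b, -θ' t ≤ θbar)
    (hθ'c : ContinuousOn θ' (Icc a b)) (hηc : ContinuousOn η (Icc a b))
    (hh : ∀ t ∈ Icc a b, HasDerivAt h (h' t) t) (hh'c : ContinuousOn h' (Icc a b))
    (ha : h a = 0) (hb : h b = 0) :
    0 ≤ ∫ t in a..b, (θ' t * h t ^ 2 / 2 + η t * h' t ^ 2) := by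
  have hhc : ContinuousOn h (Icc a b) := HasDerivAt.continuousOn hh
  have hwirtinger := sq_mul_integral_sq_le_integral_deriv_sq hab (sqrt_nonneg _) hγ hh hh'c ha hb
  rw [sq_sqrt (by positivity)] at hwirtinger
  have hlower : ∫ t in a..b, (ηbar * h' t ^ 2 - θbar / 2 * h t ^ 2) ≤
      ∫ t in a..b, (θ' t * h t ^ 2 / 2 + η t * h' t ^ 2) :=
    intervalIntegral.integral_mono_on hab
      (ContinuousOn.intervalIntegrable_of_Icc hab (by fun_prop))
      (ContinuousOn.intervalIntegrable_of_Icc hab (by fun_prop)) fun t ht => by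
        nlinarith [mul_le_mul_of_nonneg_right (hη t ht) (sq_nonneg (h' t)),
          mul_le_mul_of_nonneg_right (hθ' t ht) (sq_nonneg (h t))]
  rw [intervalIntegral.integral_sub (ContinuousOn.intervalIntegrable_of_Icc hab (by fun_prop))
    (ContinuousOn.intervalIntegrable_of_Icc hab (by fun_prop)),
    intervalIntegral.integral_const_mul, intervalIntegral.integral_const_mul] at hlower
  have hscaled := mul_le_mul_of_nonneg_left hwirtinger hηbar.le
  rw [← mul_assoc, mul_comm ηbar, div_mul_eq_mul_div, mul_div_mul_right _ _ hηbar.ne'] at hscaled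
  linarith

theorem stmt13_general (T Q : ℝ) (hT : 0 < T)
    (θ η θ' η' : ℝ → ℝ)
    (hθ : ∀ t ∈ Set.Icc 0 T, HasDerivAt θ (θ' t) t)
    (hθ'c : ContinuousOn θ' (Set.Icc 0 T))
    (hη : ∀ t ∈ Set.Icc 0 T, HasDerivAt η (η' t) t)
    (hηpos : ∀ t ∈ Set.Icc 0 T, 0 < η t)
    (ηbar θbar : ℝ)
    (hηbar : IsLeast (η '' Set.Icc 0 T) ηbar)
    (hθbar : 0 < θbar)
    (hθbar' : ∀ t ∈ Set.Icc 0 T, -θ' t ≤ θbar)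
    (hγ : Real.sqrt (θbar / (2 * ηbar)) * T < Real.pi)
    (ζs ζs' ζs'' : ℝ → ℝ)
    (hζs1 : ∀ t ∈ Set.Icc 0 T, HasDerivAt ζs (ζs' t) t)
    (hζs2 : ∀ t ∈ Set.Icc 0 T, HasDerivAt ζs' (ζs'' t) t)
    (hODE : ∀ t ∈ Set.Icc 0 T, 2 * η t * ζs'' t + 2 * η' t * ζs' t - θ' t * ζs t = 0)
    (hζs0 : ζs 0 = Q) (hζsT : ζs T = 0) :
    ∀ ζ ζ' ζ'' : ℝ → ℝ,
      (∀ t ∈ Set.Icc 0 T, HasDerivAt ζ (ζ' t) t) →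
      (∀ t ∈ Set.Icc 0 T, HasDerivAt ζ' (ζ'' t) t) →
      ContinuousOn ζ'' (Set.Icc 0 T) →
      ζ 0 = Q → ζ T = 0 →
      cash T θ η ζ ζ' ≤ cash T θ η ζs ζs' := by
  intro ζ ζ' ζ'' hζ1 hζ2 _ hζ0 hζT
  obtain ⟨⟨t₀, ht₀, rfl⟩, hηmin⟩ := hηbar
  have hmomentum : ∀ t ∈ Icc 0 T, HasDerivAt (fun u => 2 * η u * ζs' u) (θ' t * ζs t) t :=
    fun t ht => (((hη t ht).const_mul 2).mul (hζs2 t ht)).congr_deriv (by linarith [hODE t ht])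
  have hdiff := cash_sub_cash_of_hasDerivAt_momentum hT.le hθ hθ'c (HasDerivAt.continuousOn hη)
    hζs1 (HasDerivAt.continuousOn hζs2) hmomentum hζ1 (HasDerivAt.continuousOn hζ2)
    (hζ0.trans hζs0.symm) (hζT.trans hζsT.symm)
  have hsecond := integral_second_variation_nonneg (h := fun t => ζ t - ζs t) hT.le
    (hηpos t₀ ht₀) hθbar.le (by rwa [sub_zero]) (fun t ht => hηmin ⟨t, ht, rfl⟩) hθbar' hθ'c
    (HasDerivAt.continuousOn hη) (fun t ht => (hζ1 t ht).sub (hζs1 t ht))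
    ((HasDerivAt.continuousOn hζ2).sub (HasDerivAt.continuousOn hζs2))
    (by simp [hζ0, hζs0]) (by simp [hζT, hζsT])
  linarith

/-- Under `√γ·T < π` with `γ = θ̄/(2η̄)`, any twice continuously
differentiable solution `ζ*` of the Euler–Lagrange boundary value problem is a global
maximizer of the cash functional among all C² strategies with the same boundary values. -/
theorem stmt13 (T Q : ℝ) (hT : 0 < T)
    (θ η θ' η' : ℝ → ℝ)
    (hθ : ∀ t ∈ Set.Icc 0 T, HasDerivAt θ (θ' t) t)
    (hθ'c : ContinuousOn θ' (Set.Icc 0 T))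
    (hη : ∀ t ∈ Set.Icc 0 T, HasDerivAt η (η' t) t)
    (hη'c : ContinuousOn η' (Set.Icc 0 T))
    (hηpos : ∀ t ∈ Set.Icc 0 T, 0 < η t)
    (ηbar θbar : ℝ)
    (hηbar : IsLeast (η '' Set.Icc 0 T) ηbar)
    (hθbar : 0 < θbar)
    (hθbar' : ∀ t ∈ Set.Icc 0 T, -θ' t ≤ θbar)
    (hγ : Real.sqrt (θbar / (2 * ηbar)) * T < Real.pi)
    (ζs ζs' ζs'' : ℝ → ℝ)
    (hζs1 : ∀ t ∈ Set.Icc 0 T, HasDerivAt ζs (ζs' t) t)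
    (hζs2 : ∀ t ∈ Set.Icc 0 T, HasDerivAt ζs' (ζs'' t) t)
    (hζs''c : ContinuousOn ζs'' (Set.Icc 0 T))
    (hODE : ∀ t ∈ Set.Icc 0 T, 2 * η t * ζs'' t + 2 * η' t * ζs' t - θ' t * ζs t = 0)
    (hζs0 : ζs 0 = Q) (hζsT : ζs T = 0) :
    ∀ ζ ζ' ζ'' : ℝ → ℝ,
      (∀ t ∈ Set.Icc 0 T, HasDerivAt ζ (ζ' t) t) →
      (∀ t ∈ Set.Icc 0 T, HasDerivAt ζ' (ζ'' t) t) →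
      ContinuousOn ζ'' (Set.Icc 0 T) →
      ζ 0 = Q → ζ T = 0 →
      cash T θ η ζ ζ' ≤ cash T θ η ζs ζs' :=
  stmt13_general T Q hT θ η θ' η' hθ hθ'c hη hηpos ηbar θbar hηbar hθbar hθbar' hγ ζs ζs' ζs'' hζs1
    hζs2 hODE hζs0 hζsT
end

section
/- Fix T > 0 and Q > 0. Let η > 0 be a constant and let θ : [0,T] → ℝ be continuously differentiable with θ'(t) ≤ 0 for all t. Let θ̄ > 0 be a constant with θ̄ ≥ −θ'(t) for all t ∈ [0,T], set γ = θ̄/(2η), and assume √γ·T < π. If ζ : [0,T] → ℝ is twice continuously differentiable and satisfies 2η·ζ''(t) − θ'(t)ζ(t) = 0 for all t ∈ [0,T], ζ(0) = Q, and ζ(T) = 0, then ζ(t) ≥ 0 for all t, ζ is concave (ζ''(t) ≤ 0 for all t), and ζ(t) ≥ Q·(1 − t/T) for all t ∈ [0,T] (the solution is bounded below by the TWAP strategy). -/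
/-!
Write `ζ'' = q ζ` with `q = θ' / (2η) ∈ [-γ, 0]`. The comparison function
`φ t = cos (√γ (t - T/2))` solves `φ'' = -γ φ ≤ q φ` and stays positive on `[0, T]` because
`√γ T < π`. If `ζ` became negative, the ratio `ζ / φ` would attain a negative interior minimum
`t₀`, where the Wronskian `ζ' φ - ζ φ'` vanishes; up to the next point where `ζ ≥ 0` the
Wronskian has derivative `ζ'' φ - ζ φ'' ≤ 0`, so it stays `≤ 0`, the ratio decreases, and it
cannot climb back to a nonnegative value. Once `ζ ≥ 0`, the equation makes `ζ'' = q ζ ≤ 0`,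
and a concave function lies above its chord, which is the TWAP line.
-/

open Set Real

lemma antitoneOn_Icc_of_hasDerivAt_nonpos {a b : ℝ} {f f' : ℝ → ℝ}
    (hf : ∀ t ∈ Icc a b, HasDerivAt f (f' t) t) (hf' : ∀ t ∈ Ioo a b, f' t ≤ 0) :
    AntitoneOn f (Icc a b) := by
  refine antitoneOn_of_hasDerivWithinAt_nonpos (f' := f') (convex_Icc a b)
    (fun t ht => (hf t ht).continuousAt.continuousWithinAt) (fun t ht => ?_) ?_
  · rw [interior_Icc] at ht
    exact (hf t (Ioo_subset_Icc_self ht)).hasDerivWithinAt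
  · simpa only [interior_Icc] using hf'

lemma exists_first_nonneg {a b : ℝ} {f : ℝ → ℝ} (hab : a ≤ b) (hf : ContinuousOn f (Icc a b))
    (ha : f a < 0) (hb : 0 ≤ f b) :
    ∃ c ∈ Ioc a b, 0 ≤ f c ∧ ∀ t ∈ Ico a c, f t < 0 := by
  set S := Icc a b ∩ f ⁻¹' Ici 0
  have hS : IsClosed S := hf.preimage_isClosed_of_isClosed isClosed_Icc isClosed_Ici
  have hbdd : BddBelow S := ⟨a, fun t ht => ht.1.1⟩
  obtain ⟨⟨hac, hcb⟩, hc⟩ : sInf S ∈ S := hS.csInf_mem ⟨b, ⟨hab, le_rfl⟩, hb⟩ hbdd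
  refine ⟨sInf S, ⟨hac.lt_of_ne ?_, hcb⟩, hc, fun t ht => not_le.1 fun hft => ?_⟩
  · intro h
    exact (not_le.2 ha) (h ▸ hc)
  · exact ht.2.not_ge (csInf_le hbdd ⟨⟨ht.1, ht.2.le.trans hcb⟩, hft⟩)

section Comparison

variable {a b : ℝ} {q ζ ζ' ζ'' φ φ' φ'' : ℝ → ℝ}

lemma antitoneOn_wronskian
    (hζ1 : ∀ t ∈ Icc a b, HasDerivAt ζ (ζ' t) t) (hζ2 : ∀ t ∈ Icc a b, HasDerivAt ζ' (ζ'' t) t)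
    (hφ1 : ∀ t ∈ Icc a b, HasDerivAt φ (φ' t) t) (hφ2 : ∀ t ∈ Icc a b, HasDerivAt φ' (φ'' t) t)
    (hφ : ∀ t ∈ Ioo a b, 0 ≤ φ t) (hζ : ∀ t ∈ Ioo a b, ζ t ≤ 0)
    (hζq : ∀ t ∈ Ioo a b, ζ'' t ≤ q t * ζ t) (hφq : ∀ t ∈ Ioo a b, φ'' t ≤ q t * φ t) :
    AntitoneOn (fun t => ζ' t * φ t - ζ t * φ' t) (Icc a b) := by
  refine antitoneOn_Icc_of_hasDerivAt_nonpos (f' := fun t => ζ'' t * φ t - ζ t * φ'' t)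
    (fun t ht => ((hζ2 t ht).mul (hφ1 t ht)).sub ((hζ1 t ht).mul (hφ2 t ht)) |>.congr_deriv
      (by ring)) fun t ht => ?_
  have h₁ : ζ'' t * φ t ≤ q t * ζ t * φ t := mul_le_mul_of_nonneg_right (hζq t ht) (hφ t ht)
  have h₂ : ζ t * (q t * φ t) ≤ ζ t * φ'' t := mul_le_mul_of_nonpos_left (hφq t ht) (hζ t ht)
  linarith

theorem nonneg_of_sturm_comparison
    (hζ1 : ∀ t ∈ Icc a b, HasDerivAt ζ (ζ' t) t) (hζ2 : ∀ t ∈ Icc a b, HasDerivAt ζ' (ζ'' t) t)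
    (hφ1 : ∀ t ∈ Icc a b, HasDerivAt φ (φ' t) t) (hφ2 : ∀ t ∈ Icc a b, HasDerivAt φ' (φ'' t) t)
    (hφ : ∀ t ∈ Icc a b, 0 < φ t)
    (hζq : ∀ t ∈ Icc a b, ζ'' t ≤ q t * ζ t) (hφq : ∀ t ∈ Icc a b, φ'' t ≤ q t * φ t)
    (ha : 0 ≤ ζ a) (hb : 0 ≤ ζ b) :
    ∀ t ∈ Icc a b, 0 ≤ ζ t := by
  by_contra! ⟨t₁, ht₁, hζt₁⟩
  set g := fun t => ζ t / φ t
  set u := fun t => ζ' t * φ t - ζ t * φ' t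
  have hg : ∀ t ∈ Icc a b, HasDerivAt g (u t / φ t ^ 2) t :=
    fun t ht => (hζ1 t ht).div (hφ1 t ht) (hφ t ht).ne'
  obtain ⟨t₀, ht₀, hmin⟩ := isCompact_Icc.exists_isMinOn ⟨t₁, ht₁⟩
    fun t ht => (hg t ht).continuousAt.continuousWithinAt
  have hgt₀ : g t₀ < 0 := (hmin ht₁).trans_lt (div_neg_of_neg_of_pos hζt₁ (hφ t₁ ht₁))
  have hζt₀ : ζ t₀ < 0 := by
    by_contra! h
    exact hgt₀.not_ge (div_nonneg h (hφ t₀ ht₀).le)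
  have hat₀ : a < t₀ := ht₀.1.lt_of_ne fun h => by rw [← h] at hζt₀; linarith
  have ht₀b : t₀ < b := ht₀.2.lt_of_ne fun h => by rw [h] at hζt₀; linarith
  have hu₀ : u t₀ = 0 := by
    have := (hmin.isLocalMin (Icc_mem_nhds hat₀ ht₀b)).hasDerivAt_eq_zero (hg t₀ ht₀)
    simpa [(hφ t₀ ht₀).ne'] using this
  obtain ⟨c, hc, hζc, hneg⟩ := exists_first_nonneg ht₀.2
    (fun t ht => (hζ1 t ⟨ht₀.1.trans ht.1, ht.2⟩).continuousAt.continuousWithinAt) hζt₀ hb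
  have hsub : Icc t₀ c ⊆ Icc a b := Icc_subset_Icc ht₀.1 hc.2
  have hsub' : Ioo t₀ c ⊆ Icc a b := Ioo_subset_Icc_self.trans hsub
  have hu : ∀ t ∈ Icc t₀ c, u t ≤ 0 := fun t ht => hu₀ ▸
    antitoneOn_wronskian (fun t ht => hζ1 t (hsub ht)) (fun t ht => hζ2 t (hsub ht))
      (fun t ht => hφ1 t (hsub ht)) (fun t ht => hφ2 t (hsub ht))
      (fun t ht => (hφ t (hsub' ht)).le) (fun t ht => (hneg t (Ioo_subset_Ico_self ht)).le)
      (fun t ht => hζq t (hsub' ht)) (fun t ht => hφq t (hsub' ht))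
      (left_mem_Icc.2 hc.1.le) ht ht.1
  have hg_anti : AntitoneOn g (Icc t₀ c) :=
    antitoneOn_Icc_of_hasDerivAt_nonpos (fun t ht => hg t (hsub ht))
      fun t ht => div_nonpos_of_nonpos_of_nonneg (hu t (Ioo_subset_Icc_self ht)) (sq_nonneg _)
  have hgc : g c ≤ g t₀ := hg_anti (left_mem_Icc.2 hc.1.le) (right_mem_Icc.2 hc.1.le) hc.1.le
  have : 0 ≤ g c := div_nonneg hζc (hφ c (hsub (right_mem_Icc.2 hc.1.le))).le
  linarith

end Comparison

lemma chord_le_of_hasDerivAt2_nonpos {a b : ℝ} (hab : a < b) {f f' f'' : ℝ → ℝ}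
    (hf1 : ∀ t ∈ Icc a b, HasDerivAt f (f' t) t) (hf2 : ∀ t ∈ Icc a b, HasDerivAt f' (f'' t) t)
    (hf'' : ∀ t ∈ Icc a b, f'' t ≤ 0) :
    ∀ t ∈ Icc a b, (b - t) / (b - a) * f a + (t - a) / (b - a) * f b ≤ f t := by
  have hconc : ConcaveOn ℝ (Icc a b) f := by
    refine concaveOn_of_hasDerivWithinAt2_nonpos (f' := f') (f'' := f'') (convex_Icc a b)
      (fun t ht => (hf1 t ht).continuousAt.continuousWithinAt) ?_ ?_ ?_ <;>
    simp only [interior_Icc] <;> intro t ht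
    exacts [(hf1 t (Ioo_subset_Icc_self ht)).hasDerivWithinAt,
      (hf2 t (Ioo_subset_Icc_self ht)).hasDerivWithinAt, hf'' t (Ioo_subset_Icc_self ht)]
  intro t ht
  have hba : 0 < b - a := sub_pos.2 hab
  have := hconc.2 (left_mem_Icc.2 hab.le) (right_mem_Icc.2 hab.le)
    (div_nonneg (sub_nonneg.2 ht.2) hba.le) (div_nonneg (sub_nonneg.2 ht.1) hba.le)
    (by field_simp; ring)
  have hmid : (b - t) / (b - a) * a + (t - a) / (b - a) * b = t := by
    field_simp
    ring
  simpa only [smul_eq_mul, hmid] using this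

lemma hasDerivAt_cos_mul_sub (s c t : ℝ) :
    HasDerivAt (fun t => cos (s * (t - c))) (-(s * sin (s * (t - c)))) t := by
  have := ((hasDerivAt_id' t).sub_const c).const_mul s
  exact ((hasDerivAt_cos _).comp t this).congr_deriv (by ring)

lemma hasDerivAt_neg_mul_sin_mul_sub (s c t : ℝ) :
    HasDerivAt (fun t => -(s * sin (s * (t - c)))) (-(s ^ 2 * cos (s * (t - c)))) t := by
  have := ((hasDerivAt_id' t).sub_const c).const_mul s
  exact (((hasDerivAt_sin _).comp t this).const_mul s).neg.congr_deriv (by ring)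

lemma cos_mul_sub_half_pos {s T t : ℝ} (hs : 0 ≤ s) (hsT : s * T < π) (ht : t ∈ Icc 0 T) :
    0 < cos (s * (t - T / 2)) := by
  have h₀ : 0 ≤ s * t := mul_nonneg hs ht.1
  have h₁ : s * t ≤ s * T := mul_le_mul_of_nonneg_left ht.2 hs
  apply cos_pos_of_mem_Ioo
  constructor <;> nlinarith

theorem stmt16_general (T Q : ℝ) (hT : 0 < T) (hQ : 0 < Q)
    (η : ℝ) (hη : 0 < η)
    (θ' : ℝ → ℝ)
    (hθ'nonpos : ∀ t ∈ Set.Icc 0 T, θ' t ≤ 0)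
    (θbar : ℝ) (hθbar : 0 < θbar)
    (hθbar' : ∀ t ∈ Set.Icc 0 T, -θ' t ≤ θbar)
    (hγ : Real.sqrt (θbar / (2 * η)) * T < Real.pi)
    (ζ ζ' ζ'' : ℝ → ℝ)
    (hζ1 : ∀ t ∈ Set.Icc 0 T, HasDerivAt ζ (ζ' t) t)
    (hζ2 : ∀ t ∈ Set.Icc 0 T, HasDerivAt ζ' (ζ'' t) t)
    (hODE : ∀ t ∈ Set.Icc 0 T, 2 * η * ζ'' t - θ' t * ζ t = 0)
    (hζ0 : ζ 0 = Q) (hζT : ζ T = 0) :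
    (∀ t ∈ Set.Icc 0 T, 0 ≤ ζ t) ∧
    (∀ t ∈ Set.Icc 0 T, ζ'' t ≤ 0) ∧
    (∀ t ∈ Set.Icc 0 T, Q * (1 - t / T) ≤ ζ t) := by
  set s := √(θbar / (2 * η))
  have hs2 : s ^ 2 = θbar / (2 * η) := sq_sqrt (by positivity)
  have hζq : ∀ t ∈ Icc 0 T, ζ'' t = θ' t / (2 * η) * ζ t := fun t ht => by
    field_simp
    linarith [hODE t ht]
  have hφq : ∀ t ∈ Icc 0 T,
      -(s ^ 2 * cos (s * (t - T / 2))) ≤ θ' t / (2 * η) * cos (s * (t - T / 2)) := by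
    intro t ht
    rw [hs2, ← neg_mul, ← neg_div]
    gcongr
    · exact (cos_mul_sub_half_pos (sqrt_nonneg _) hγ ht).le
    · linarith [hθbar' t ht]
  have hnonneg : ∀ t ∈ Icc 0 T, 0 ≤ ζ t :=
    nonneg_of_sturm_comparison hζ1 hζ2 (fun t _ => hasDerivAt_cos_mul_sub s (T / 2) t)
      (fun t _ => hasDerivAt_neg_mul_sin_mul_sub s (T / 2) t)
      (fun t ht => cos_mul_sub_half_pos (sqrt_nonneg _) hγ ht) (fun t ht => (hζq t ht).le) hφq
      (hζ0 ▸ hQ.le) hζT.ge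
  have hconcave : ∀ t ∈ Icc 0 T, ζ'' t ≤ 0 := fun t ht => (hζq t ht).trans_le <|
    mul_nonpos_of_nonpos_of_nonneg (div_nonpos_of_nonpos_of_nonneg (hθ'nonpos t ht) (by positivity))
      (hnonneg t ht)
  refine ⟨hnonneg, hconcave, fun t ht => ?_⟩
  have hchord := chord_le_of_hasDerivAt2_nonpos hT hζ1 hζ2 hconcave t ht
  rw [hζ0, hζT, sub_zero, mul_zero, add_zero] at hchord
  convert hchord using 1
  field_simp

/-- With constant temporary impact `η > 0` and nonincreasing permanent
impact `θ`, if `θ̄ > 0` satisfies `θ̄ ≥ −θ'` on `[0,T]`, `γ = θ̄/(2η)`, and `√γ·T < π`, then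
any twice continuously differentiable solution of `2η ζ'' − θ' ζ = 0`, `ζ(0) = Q > 0`,
`ζ(T) = 0` is nonnegative, concave, and bounded below by the TWAP strategy. -/
theorem stmt16 (T Q : ℝ) (hT : 0 < T) (hQ : 0 < Q)
    (η : ℝ) (hη : 0 < η)
    (θ θ' : ℝ → ℝ)
    (hθ : ∀ t ∈ Set.Icc 0 T, HasDerivAt θ (θ' t) t)
    (hθ'c : ContinuousOn θ' (Set.Icc 0 T))
    (hθ'nonpos : ∀ t ∈ Set.Icc 0 T, θ' t ≤ 0)
    (θbar : ℝ) (hθbar : 0 < θbar)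
    (hθbar' : ∀ t ∈ Set.Icc 0 T, -θ' t ≤ θbar)
    (hγ : Real.sqrt (θbar / (2 * η)) * T < Real.pi)
    (ζ ζ' ζ'' : ℝ → ℝ)
    (hζ1 : ∀ t ∈ Set.Icc 0 T, HasDerivAt ζ (ζ' t) t)
    (hζ2 : ∀ t ∈ Set.Icc 0 T, HasDerivAt ζ' (ζ'' t) t)
    (hζ''c : ContinuousOn ζ'' (Set.Icc 0 T))
    (hODE : ∀ t ∈ Set.Icc 0 T, 2 * η * ζ'' t - θ' t * ζ t = 0)
    (hζ0 : ζ 0 = Q) (hζT : ζ T = 0) :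
    (∀ t ∈ Set.Icc 0 T, 0 ≤ ζ t) ∧
    (∀ t ∈ Set.Icc 0 T, ζ'' t ≤ 0) ∧
    (∀ t ∈ Set.Icc 0 T, Q * (1 - t / T) ≤ ζ t) :=
  stmt16_general T Q hT hQ η hη θ' hθ'nonpos θbar hθbar hθbar' hγ ζ ζ' ζ'' hζ1 hζ2 hODE hζ0 hζT
end

section
/- Fix T > 0 and Q > 0. Let θ, η : [0,T] → ℝ be continuously differentiable with η(t) > 0, θ'(t) ≤ 0, and η'(t) ≥ 0 for all t ∈ [0,T]. Let η̄ = min_{t∈[0,T]} η(t) and let θ̄ > 0 be a constant with θ̄ ≥ −θ'(t) for all t; set γ = θ̄/(2η̄) and assume √γ·T < π. If ζ : [0,T] → ℝ is twice continuously differentiable and satisfies 2η(t)ζ''(t) + 2η'(t)ζ'(t) − θ'(t)ζ(t) = 0 for all t ∈ [0,T], ζ(0) = Q, and ζ(T) = 0, then ζ(t) ≥ 0 for all t, and there exists t₀ ∈ [0,T] such that ζ is nondecreasing on [0,t₀] and nonincreasing on [t₀,T]; that is, ζ is either nonincreasing on all of [0,T] or has exactly one turning point. -/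
/-!
Compare `ζ`, via Picone's identity, with `v(t) = cos(√γ (t - T/2))`, a solution of
`2η̄ v'' + θ̄ v = 0` that stays positive on `[0,T]` because `√γ T < π`. If `ζ` vanished at some `a`
and at `T`, Picone's function `ζ·2ηζ' - ζ²·2η̄v'/v` would vanish at both ends while being
nondecreasing, so its derivative, a sum of nonnegative terms containing `2η̄ v² ((ζ/v)')²`, would
vanish: `ζ/v` is constant, so `ζ = 0` on `[a,T]`. Hence `ζ`, positive at `0`, never becomes
negative. Then the flux `2ηζ'` has derivative `θ'ζ ≤ 0`, so `ζ'` changes sign at most once,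
from `+` to `-`.
-/

open Set Topology Real

theorem monotoneOn_Icc_of_hasDerivAt {f f' : ℝ → ℝ} {a b : ℝ}
    (hf : ∀ t ∈ Icc a b, HasDerivAt f (f' t) t) (hf' : ∀ t ∈ Ioo a b, 0 ≤ f' t) :
    MonotoneOn f (Icc a b) :=
  monotoneOn_of_hasDerivWithinAt_nonneg (convex_Icc a b)
    (fun t ht => (hf t ht).continuousAt.continuousWithinAt)
    (fun t ht => (hf t (interior_subset ht)).hasDerivWithinAt) (by rwa [interior_Icc])

theorem antitoneOn_Icc_of_hasDerivAt {f f' : ℝ → ℝ} {a b : ℝ}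
    (hf : ∀ t ∈ Icc a b, HasDerivAt f (f' t) t) (hf' : ∀ t ∈ Ioo a b, f' t ≤ 0) :
    AntitoneOn f (Icc a b) :=
  antitoneOn_of_hasDerivWithinAt_nonpos (convex_Icc a b)
    (fun t ht => (hf t ht).continuousAt.continuousWithinAt)
    (fun t ht => (hf t (interior_subset ht)).hasDerivWithinAt) (by rwa [interior_Icc])

theorem eq_zero_of_hasDerivAt_nonneg_of_eq {F G : ℝ → ℝ} {a b : ℝ}
    (hF : ∀ t ∈ Icc a b, HasDerivAt F (G t) t) (hG : ∀ t ∈ Ioo a b, 0 ≤ G t) (hab : F a = F b) :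
    ∀ t ∈ Ioo a b, G t = 0 := by
  intro t ht
  have hle : a ≤ b := (ht.1.trans ht.2).le
  have hmono := monotoneOn_Icc_of_hasDerivAt hF hG
  have hconst : ∀ x ∈ Icc a b, F x = F a := fun x hx =>
    le_antisymm (hab ▸ hmono hx ⟨hle, le_rfl⟩ hx.2) (hmono ⟨le_rfl, hle⟩ hx hx.1)
  have hev : F =ᶠ[𝓝 t] fun _ => F a := by
    filter_upwards [isOpen_Ioo.mem_nhds ht] with x hx using hconst x (Ioo_subset_Icc_self hx)
  exact (hF t (Ioo_subset_Icc_self ht)).unique ((hasDerivAt_const t _).congr_of_eventuallyEq hev)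

theorem exists_monotoneOn_antitoneOn_of_hasDerivAt {f f' : ℝ → ℝ} {a b : ℝ} (hab : a ≤ b)
    (hf : ∀ t ∈ Icc a b, HasDerivAt f (f' t) t)
    (hf' : ∀ x ∈ Icc a b, ∀ y ∈ Icc a b, x ≤ y → 0 ≤ f' y → 0 ≤ f' x) :
    ∃ t₀ ∈ Icc a b, MonotoneOn f (Icc a t₀) ∧ AntitoneOn f (Icc t₀ b) := by
  set S := {t ∈ Icc a b | t = a ∨ 0 ≤ f' t}
  have haS : a ∈ S := ⟨⟨le_rfl, hab⟩, Or.inl rfl⟩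
  have hS : BddAbove S := ⟨b, fun t ht => ht.1.2⟩
  have ht₀ : sSup S ∈ Icc a b := ⟨le_csSup hS haS, csSup_le ⟨a, haS⟩ fun t ht => ht.1.2⟩
  refine ⟨sSup S, ht₀, ?_, ?_⟩
  · refine monotoneOn_Icc_of_hasDerivAt (fun t ht => hf t ⟨ht.1, ht.2.trans ht₀.2⟩) ?_
    intro t ht
    obtain ⟨u, ⟨hu, hua | hu'⟩, htu⟩ := exists_lt_of_lt_csSup ⟨a, haS⟩ ht.2
    · exact absurd hua (ht.1.trans htu).ne'
    · exact hf' t ⟨ht.1.le, htu.le.trans hu.2⟩ u hu htu.le hu'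
  · refine antitoneOn_Icc_of_hasDerivAt (fun t ht => hf t ⟨ht₀.1.trans ht.1, ht.2⟩) ?_
    intro t ht
    have htS : t ∉ S := fun h => (le_csSup hS h).not_gt ht.1
    by_contra! h
    exact htS ⟨⟨(ht₀.1.trans_lt ht.1).le, ht.2.le⟩, Or.inr h.le⟩

/-- `U = p u'` and `V = P v'` are the fluxes of `(p u')' + q u = 0` and `(P v')' + Q v = 0`. -/
theorem hasDerivAt_picone {u U v V : ℝ → ℝ} {u' v' p P q Q t : ℝ}
    (hu : HasDerivAt u u' t) (hU : HasDerivAt U (-(q * u t)) t) (hUt : U t = p * u')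
    (hv : HasDerivAt v v' t) (hV : HasDerivAt V (-(Q * v t)) t) (hVt : V t = P * v')
    (hvt : v t ≠ 0) :
    HasDerivAt (fun s => u s * U s - u s ^ 2 * V s / v s)
      ((Q - q) * u t ^ 2 + (p - P) * u' ^ 2 + P * (u' - u t * v' / v t) ^ 2) t := by
  refine ((hu.mul hU).sub (((hu.pow 2).mul hV).div hv hvt)).congr_deriv ?_
  simp only [Pi.mul_apply, Pi.pow_apply, hUt, hVt]
  field_simp
  ring

section SturmPicone

variable {u u' U v v' V p P q Q : ℝ → ℝ} {a b : ℝ}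

theorem eqOn_zero_of_sturm_picone
    (hu : ∀ t ∈ Icc a b, HasDerivAt u (u' t) t)
    (hU : ∀ t ∈ Icc a b, HasDerivAt U (-(q t * u t)) t) (hUt : ∀ t ∈ Icc a b, U t = p t * u' t)
    (hv : ∀ t ∈ Icc a b, HasDerivAt v (v' t) t)
    (hV : ∀ t ∈ Icc a b, HasDerivAt V (-(Q t * v t)) t) (hVt : ∀ t ∈ Icc a b, V t = P t * v' t)
    (hvpos : ∀ t ∈ Icc a b, 0 < v t) (hP : ∀ t ∈ Icc a b, 0 < P t)
    (hPp : ∀ t ∈ Icc a b, P t ≤ p t) (hqQ : ∀ t ∈ Icc a b, q t ≤ Q t)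
    (hua : u a = 0) (hub : u b = 0) : ∀ t ∈ Icc a b, u t = 0 := by
  set w : ℝ → ℝ := fun t => u' t - u t * v' t / v t
  have hpicone : ∀ t ∈ Icc a b, HasDerivAt (fun s => u s * U s - u s ^ 2 * V s / v s)
      ((Q t - q t) * u t ^ 2 + (p t - P t) * u' t ^ 2 + P t * w t ^ 2) t := fun t ht =>
    hasDerivAt_picone (hu t ht) (hU t ht) (hUt t ht) (hv t ht) (hV t ht) (hVt t ht)
      (hvpos t ht).ne'
  have hterms : ∀ t ∈ Ioo a b, 0 ≤ (Q t - q t) * u t ^ 2 ∧ 0 ≤ (p t - P t) * u' t ^ 2 ∧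
      0 ≤ P t * w t ^ 2 := fun t ht =>
    have ht := Ioo_subset_Icc_self ht
    ⟨mul_nonneg (sub_nonneg.2 (hqQ t ht)) (sq_nonneg _),
      mul_nonneg (sub_nonneg.2 (hPp t ht)) (sq_nonneg _), mul_nonneg (hP t ht).le (sq_nonneg _)⟩
  have hG := eq_zero_of_hasDerivAt_nonneg_of_eq hpicone
    (fun t ht => by obtain ⟨h₁, h₂, h₃⟩ := hterms t ht; linarith) (by simp [hua, hub])
  have hw : ∀ t ∈ Ioo a b, w t = 0 := fun t ht => by
    obtain ⟨h₁, h₂, h₃⟩ := hterms t ht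
    have hPw : P t * w t ^ 2 = 0 := by linarith [hG t ht]
    simpa [(hP t (Ioo_subset_Icc_self ht)).ne'] using hPw
  have hquot : ∀ t ∈ Icc a b, HasDerivAt (fun s => u s / v s) (w t / v t) t := fun t ht =>
    ((hu t ht).div (hv t ht) (hvpos t ht).ne').congr_deriv (by
      have := (hvpos t ht).ne'; simp only [w]; field_simp)
  have hquot' : ∀ t ∈ Ioo a b, w t / v t = 0 := fun t ht => by rw [hw t ht, zero_div]
  intro t ht
  have ha : a ∈ Icc a b := ⟨le_rfl, ht.1.trans ht.2⟩
  have hconst : u t / v t = u a / v a := le_antisymm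
    (antitoneOn_Icc_of_hasDerivAt hquot (fun s hs => (hquot' s hs).le) ha ht ht.1)
    (monotoneOn_Icc_of_hasDerivAt hquot (fun s hs => (hquot' s hs).ge) ha ht ht.1)
  simpa [hua, (hvpos t ht).ne'] using hconst

theorem nonneg_of_sturm_picone
    (hu : ∀ t ∈ Icc a b, HasDerivAt u (u' t) t)
    (hU : ∀ t ∈ Icc a b, HasDerivAt U (-(q t * u t)) t) (hUt : ∀ t ∈ Icc a b, U t = p t * u' t)
    (hv : ∀ t ∈ Icc a b, HasDerivAt v (v' t) t)
    (hV : ∀ t ∈ Icc a b, HasDerivAt V (-(Q t * v t)) t) (hVt : ∀ t ∈ Icc a b, V t = P t * v' t)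
    (hvpos : ∀ t ∈ Icc a b, 0 < v t) (hP : ∀ t ∈ Icc a b, 0 < P t)
    (hPp : ∀ t ∈ Icc a b, P t ≤ p t) (hqQ : ∀ t ∈ Icc a b, q t ≤ Q t)
    (hua : 0 ≤ u a) (hub : u b = 0) : ∀ t ∈ Icc a b, 0 ≤ u t := by
  intro c hc
  by_contra! hneg
  have hcont : ContinuousOn u (Icc a c) := fun t ht =>
    (hu t ⟨ht.1, ht.2.trans hc.2⟩).continuousAt.continuousWithinAt
  obtain ⟨z, hz, huz⟩ := intermediate_value_Icc' hc.1 hcont ⟨hneg.le, hua⟩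
  have hsub : Icc z b ⊆ Icc a b := Icc_subset_Icc hz.1 le_rfl
  have huc := eqOn_zero_of_sturm_picone (fun t ht => hu t (hsub ht)) (fun t ht => hU t (hsub ht))
    (fun t ht => hUt t (hsub ht)) (fun t ht => hv t (hsub ht)) (fun t ht => hV t (hsub ht))
    (fun t ht => hVt t (hsub ht)) (fun t ht => hvpos t (hsub ht)) (fun t ht => hP t (hsub ht))
    (fun t ht => hPp t (hsub ht)) (fun t ht => hqQ t (hsub ht)) huz hub c ⟨hz.2, hc.2⟩
  exact hneg.ne huc

end SturmPicone

theorem exists_pos_harmonic_of_mul_lt_pi {s a b : ℝ} (hs : 0 ≤ s) (hab : s * (b - a) < π) :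
    ∃ v v' : ℝ → ℝ, (∀ t, HasDerivAt v (v' t) t) ∧ (∀ t, HasDerivAt v' (-(s ^ 2 * v t)) t) ∧
      ∀ t ∈ Icc a b, 0 < v t := by
  set c := (a + b) / 2 with hc
  have hlin (t : ℝ) : HasDerivAt (fun t => s * (t - c)) s t := by
    simpa using ((hasDerivAt_id t).sub_const c).const_mul s
  refine ⟨fun t => cos (s * (t - c)), fun t => -(s * sin (s * (t - c))), fun t => ?_,
    fun t => ?_, fun t ht => ?_⟩
  · exact (hlin t).cos.congr_deriv (by ring)
  · exact ((hlin t).sin.const_mul s).neg.congr_deriv (by ring)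
  · apply cos_pos_of_mem_Ioo
    constructor <;> nlinarith [mul_nonneg hs (sub_nonneg.2 ht.1), mul_nonneg hs (sub_nonneg.2 ht.2),
      hc]

theorem stmt19_general (T Q : ℝ) (hT : 0 < T) (hQ : 0 < Q)
    (η θ' η' : ℝ → ℝ)
    (hη : ∀ t ∈ Set.Icc 0 T, HasDerivAt η (η' t) t)
    (hηpos : ∀ t ∈ Set.Icc 0 T, 0 < η t)
    (hθ'nonpos : ∀ t ∈ Set.Icc 0 T, θ' t ≤ 0)
    (ηbar θbar : ℝ)
    (hηbar : IsLeast (η '' Set.Icc 0 T) ηbar)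
    (hθbar : 0 < θbar)
    (hθbar' : ∀ t ∈ Set.Icc 0 T, -θ' t ≤ θbar)
    (hγ : Real.sqrt (θbar / (2 * ηbar)) * T < Real.pi)
    (ζ ζ' ζ'' : ℝ → ℝ)
    (hζ1 : ∀ t ∈ Set.Icc 0 T, HasDerivAt ζ (ζ' t) t)
    (hζ2 : ∀ t ∈ Set.Icc 0 T, HasDerivAt ζ' (ζ'' t) t)
    (hODE : ∀ t ∈ Set.Icc 0 T, 2 * η t * ζ'' t + 2 * η' t * ζ' t - θ' t * ζ t = 0)
    (hζ0 : ζ 0 = Q) (hζT : ζ T = 0) :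
    (∀ t ∈ Set.Icc 0 T, 0 ≤ ζ t) ∧
    ∃ t₀ ∈ Set.Icc 0 T,
      MonotoneOn ζ (Set.Icc 0 t₀) ∧ AntitoneOn ζ (Set.Icc t₀ T) := by
  have hηbar_le : ∀ t ∈ Icc 0 T, ηbar ≤ η t := fun t ht => hηbar.2 ⟨t, ht, rfl⟩
  have hηbar_pos : 0 < ηbar := by
    obtain ⟨x, hx, rfl⟩ := hηbar.1
    exact hηpos x hx
  obtain ⟨v, v', hv, hv', hvpos⟩ :=
    exists_pos_harmonic_of_mul_lt_pi (a := 0) (sqrt_nonneg _) (by rwa [sub_zero])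
  have hγ_sq : 2 * ηbar * sqrt (θbar / (2 * ηbar)) ^ 2 = θbar := by
    rw [sq_sqrt (by positivity)]
    field_simp
  have hflux : ∀ t ∈ Icc 0 T, HasDerivAt (fun s => 2 * η s * ζ' s) (θ' t * ζ t) t :=
    fun t ht => (((hη t ht).const_mul 2).mul (hζ2 t ht)).congr_deriv (by linarith [hODE t ht])
  have hV (t : ℝ) : HasDerivAt (fun s => 2 * ηbar * v' s) (-(θbar * v t)) t :=
    ((hv' t).const_mul _).congr_deriv (by linear_combination (-v t) * hγ_sq)
  have hnonneg : ∀ t ∈ Icc 0 T, 0 ≤ ζ t :=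
    nonneg_of_sturm_picone (p := fun s => 2 * η s) (q := fun s => -θ' s)
      (P := fun _ => 2 * ηbar) (Q := fun _ => θbar) hζ1 (fun t ht => by simpa using hflux t ht)
      (fun _ _ => rfl) (fun t _ => hv t) (fun t _ => hV t) (fun _ _ => rfl) hvpos
      (fun _ _ => by positivity) (fun t ht => by linarith [hηbar_le t ht]) hθbar'
      (hζ0 ▸ hQ.le) hζT
  have hflux_anti : AntitoneOn (fun s => 2 * η s * ζ' s) (Icc 0 T) :=
    antitoneOn_Icc_of_hasDerivAt hflux fun t ht =>
      mul_nonpos_of_nonpos_of_nonneg (hθ'nonpos t (Ioo_subset_Icc_self ht))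
        (hnonneg t (Ioo_subset_Icc_self ht))
  refine ⟨hnonneg, exists_monotoneOn_antitoneOn_of_hasDerivAt hT.le hζ1 ?_⟩
  intro x hx y hy hxy hy'
  have hx' : 0 ≤ 2 * η x * ζ' x :=
    (mul_nonneg (by linarith [hηpos y hy]) hy').trans (hflux_anti hx hy hxy)
  exact nonneg_of_mul_nonneg_right hx' (by linarith [hηpos x hx])

/-- If the permanent impact is nonincreasing, the temporary impact is
nondecreasing, and `√γ·T < π` with `γ = θ̄/(2η̄)`, then any twice continuously
differentiable solution of the Euler–Lagrange boundary value problem (with `Q > 0`) is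
nonnegative and there is `t₀ ∈ [0,T]` such that `ζ` is nondecreasing on `[0,t₀]` and
nonincreasing on `[t₀,T]` (either monotone decreasing or exactly one turning point). -/
theorem stmt19 (T Q : ℝ) (hT : 0 < T) (hQ : 0 < Q)
    (θ η θ' η' : ℝ → ℝ)
    (hθ : ∀ t ∈ Set.Icc 0 T, HasDerivAt θ (θ' t) t)
    (hθ'c : ContinuousOn θ' (Set.Icc 0 T))
    (hη : ∀ t ∈ Set.Icc 0 T, HasDerivAt η (η' t) t)
    (hη'c : ContinuousOn η' (Set.Icc 0 T))
    (hηpos : ∀ t ∈ Set.Icc 0 T, 0 < η t)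
    (hθ'nonpos : ∀ t ∈ Set.Icc 0 T, θ' t ≤ 0)
    (hη'nonneg : ∀ t ∈ Set.Icc 0 T, 0 ≤ η' t)
    (ηbar θbar : ℝ)
    (hηbar : IsLeast (η '' Set.Icc 0 T) ηbar)
    (hθbar : 0 < θbar)
    (hθbar' : ∀ t ∈ Set.Icc 0 T, -θ' t ≤ θbar)
    (hγ : Real.sqrt (θbar / (2 * ηbar)) * T < Real.pi)
    (ζ ζ' ζ'' : ℝ → ℝ)
    (hζ1 : ∀ t ∈ Set.Icc 0 T, HasDerivAt ζ (ζ' t) t)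
    (hζ2 : ∀ t ∈ Set.Icc 0 T, HasDerivAt ζ' (ζ'' t) t)
    (hζ''c : ContinuousOn ζ'' (Set.Icc 0 T))
    (hODE : ∀ t ∈ Set.Icc 0 T, 2 * η t * ζ'' t + 2 * η' t * ζ' t - θ' t * ζ t = 0)
    (hζ0 : ζ 0 = Q) (hζT : ζ T = 0) :
    (∀ t ∈ Set.Icc 0 T, 0 ≤ ζ t) ∧
    ∃ t₀ ∈ Set.Icc 0 T,
      MonotoneOn ζ (Set.Icc 0 t₀) ∧ AntitoneOn ζ (Set.Icc t₀ T) :=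
  stmt19_general T Q hT hQ η θ' η' hη hηpos hθ'nonpos ηbar θbar hηbar hθbar hθbar' hγ ζ ζ' ζ'' hζ1
    hζ2 hODE hζ0 hζT
end
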